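/- arXiv:2306.06055 — 4 statements merged into one kernel-verified Lean document; each statement's English description precedes it below -/
import Mathlib

section
/- If R has density p_R(r) = (1/√(4π)) r² e^{-r²/4} on [0,∞), then for every M > 0, E[sinc(√M · R)] = e^{−M}. -/
open MeasureTheory Real

section Aux

open Set Filter

private lemma cos_gaussian_real (s : ℝ) :
    ∫ x : ℝ, Real.cos (s * x) * Real.exp (-x ^ 2 / 4) = 2 * Real.sqrt π * Real.exp (-s ^ 2) := by
  have key := fourierIntegral_gaussian (b := (1/4 : ℂ)) (by norm_num) (s : ℂ)
  have hint : Integrable fun x : ℝ =>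
      Complex.exp (Complex.I * s * x) * Complex.exp (-(1/4 : ℂ) * x ^ 2) := by
    have h := integrable_cexp_quadratic (b := (1/4 : ℂ)) (by norm_num) (Complex.I * s) 0
    refine h.congr ?_
    filter_upwards with x
    rw [← Complex.exp_add]
    ring_nf
  have hre : ∀ x : ℝ, Real.cos (s * x) * Real.exp (-x ^ 2 / 4) =
      (Complex.exp (Complex.I * s * x) * Complex.exp (-(1/4 : ℂ) * x ^ 2)).re := by
    intro x
    have h1 : Complex.exp (-(1/4 : ℂ) * x ^ 2) = (Real.exp (-x ^ 2 / 4) : ℂ) := by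
      rw [Complex.ofReal_exp]
      congr 1
      push_cast
      ring
    have h2 : Complex.I * s * x = ((s * x : ℝ) : ℂ) * Complex.I := by
      push_cast; ring
    rw [h1, h2]
    simp [Complex.mul_re, Complex.exp_ofReal_mul_I_re, -Complex.ofReal_exp, -Complex.ofReal_mul]
  simp_rw [hre]
  rw [← RCLike.re_eq_complex_re, integral_re hint, RCLike.re_eq_complex_re, key]
  have h4 : (↑π / (1/4 : ℂ)) = ((4 * π : ℝ) : ℂ) := by push_cast; ring
  have h5 : ((4 * π : ℝ) : ℂ) ^ (1/2 : ℂ) = ((Real.sqrt (4 * π) : ℝ) : ℂ) := by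
    rw [Real.sqrt_eq_rpow, Complex.ofReal_cpow (by positivity)]
    norm_num
  have h6 : Complex.exp (-(s:ℂ) ^ 2 / (4 * (1/4))) = ((Real.exp (-s^2) : ℝ) : ℂ) := by
    rw [Complex.ofReal_exp]
    congr 1
    push_cast
    ring
  rw [h4, h5, h6, ← Complex.ofReal_mul, Complex.ofReal_re]
  rw [show Real.sqrt (4 * π) = 2 * Real.sqrt π by
    rw [show (4:ℝ) * π = 2^2 * π by norm_num, Real.sqrt_mul (by positivity),
      Real.sqrt_sq (by norm_num)]]

private lemma cos_gaussian_int (s : ℝ) :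
    Integrable fun x : ℝ => Real.cos (s * x) * Real.exp (-x ^ 2 / 4) := by
  have hb : Integrable fun x : ℝ => Real.exp (-(1/4 : ℝ) * x ^ 2) :=
    integrable_exp_neg_mul_sq (by norm_num)
  refine hb.mono' ?_ ?_
  · exact (Real.continuous_cos.comp (continuous_const.mul continuous_id)).mul
      (Real.continuous_exp.comp (by continuity)) |>.aestronglyMeasurable
  · filter_upwards with x
    rw [Real.norm_eq_abs, abs_mul, show -(1/4:ℝ) * x^2 = -x^2/4 by ring]
    calc |Real.cos (s*x)| * |Real.exp (-x^2/4)| ≤ 1 * |Real.exp (-x^2/4)| := by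
          gcongr; exact Real.abs_cos_le_one _
      _ = Real.exp (-x^2/4) := by rw [one_mul, abs_of_pos (Real.exp_pos _)]

private lemma sin_mul_gaussian_int (s : ℝ) :
    Integrable fun x : ℝ => Real.sin (s * x) * x * Real.exp (-x ^ 2 / 4) := by
  have hb : Integrable fun x : ℝ => |x * Real.exp (-(1/4 : ℝ) * x ^ 2)| :=
    (integrable_mul_exp_neg_mul_sq (by norm_num)).abs
  refine hb.mono' ?_ ?_
  · exact ((Real.continuous_sin.comp (continuous_const.mul continuous_id)).mul
      continuous_id).mul (Real.continuous_exp.comp (by continuity)) |>.aestronglyMeasurable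
  · filter_upwards with x
    rw [Real.norm_eq_abs, show -(1/4:ℝ) * x^2 = -x^2/4 by ring, abs_mul, abs_mul]
    calc |Real.sin (s*x)| * |x| * |Real.exp (-x^2/4)|
        ≤ 1 * |x| * |Real.exp (-x^2/4)| := by gcongr; exact Real.abs_sin_le_one _
      _ = |x| * |Real.exp (-x^2/4)| := by ring
      _ = |x * Real.exp (-x^2/4)| := (abs_mul _ _).symm

private lemma exp_gauss_tendsto :
    Tendsto (fun r : ℝ => Real.exp (-r ^ 2 / 4)) atTop (nhds 0) := by
  apply Real.tendsto_exp_atBot.comp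
  have h1 : Tendsto (fun r : ℝ => r ^ 2 / 4) atTop atTop :=
    (tendsto_pow_atTop two_ne_zero).atTop_div_const (by norm_num)
  have := tendsto_neg_atTop_atBot.comp h1
  refine this.congr fun r => by simp [neg_div]

private lemma hasDeriv_F (s r : ℝ) :
    HasDerivAt (fun r : ℝ => -2 * Real.sin (s * r) * Real.exp (-r ^ 2 / 4))
      (-2 * s * (Real.cos (s * r) * Real.exp (-r ^ 2 / 4))
        + Real.sin (s * r) * r * Real.exp (-r ^ 2 / 4)) r := by
  have h1 : HasDerivAt (fun r : ℝ => Real.sin (s * r)) (Real.cos (s * r) * s) r := by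
    have := (Real.hasDerivAt_sin (s * r)).comp r ((hasDerivAt_id r).const_mul s)
    simpa [Function.comp_def] using this
  have h2 : HasDerivAt (fun r : ℝ => Real.exp (-r ^ 2 / 4))
      (Real.exp (-r ^ 2 / 4) * (-(2 * r ^ 1) / 4)) r := by
    have := (Real.hasDerivAt_exp (-r ^ 2 / 4)).comp r (((hasDerivAt_pow 2 r).neg).div_const 4)
    simpa [Function.comp_def] using this
  have h3 := (h1.mul h2).const_mul (-2 : ℝ)
  convert h3 using 1
  · rfl
  · rfl
  · ext r; simp only [Pi.mul_apply]; ring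
  · ring

private lemma sin_gaussian_Ioi (s : ℝ) :
    ∫ r in Ioi (0:ℝ), Real.sin (s * r) * r * Real.exp (-r ^ 2 / 4)
      = 2 * s * ∫ r in Ioi (0:ℝ), Real.cos (s * r) * Real.exp (-r ^ 2 / 4) := by
  have hint1 : IntegrableOn (fun r : ℝ => -2 * s * (Real.cos (s * r) * Real.exp (-r ^ 2 / 4)))
      (Ioi 0) := (((cos_gaussian_int s).const_mul (-2 * s))).integrableOn
  have hint2 : IntegrableOn (fun r : ℝ => Real.sin (s * r) * r * Real.exp (-r ^ 2 / 4))
      (Ioi 0) := (sin_mul_gaussian_int s).integrableOn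
  have hint : IntegrableOn (fun r : ℝ => -2 * s * (Real.cos (s * r) * Real.exp (-r ^ 2 / 4))
      + Real.sin (s * r) * r * Real.exp (-r ^ 2 / 4)) (Ioi 0) := hint1.add hint2
  have htend : Tendsto (fun r : ℝ => -2 * Real.sin (s * r) * Real.exp (-r ^ 2 / 4)) atTop
      (nhds 0) := by
    apply squeeze_zero_norm (a := fun r : ℝ => 2 * Real.exp (-r ^ 2 / 4))
    · intro r
      rw [Real.norm_eq_abs, abs_mul, abs_mul]
      calc |(-2:ℝ)| * |Real.sin (s*r)| * |Real.exp (-r^2/4)|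
          ≤ 2 * 1 * Real.exp (-r^2/4) := by
            rw [abs_of_pos (Real.exp_pos _)]
            gcongr
            · rw [abs_neg, abs_two]
            · exact Real.abs_sin_le_one _
        _ = 2 * Real.exp (-r^2/4) := by ring
    · simpa using exp_gauss_tendsto.const_mul 2
  have hIBP := integral_Ioi_of_hasDerivAt_of_tendsto' (a := 0)
      (fun x _ => hasDeriv_F s x) hint htend
  simp only [mul_zero, Real.sin_zero, zero_mul, mul_one, zero_sub, neg_zero, mul_zero] at hIBP
  rw [integral_add hint1 hint2, integral_const_mul] at hIBP
  linarith [hIBP]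

private lemma cos_gaussian_Ioi (s : ℝ) :
    ∫ x in Ioi (0:ℝ), Real.cos (s * x) * Real.exp (-x ^ 2 / 4)
      = Real.sqrt π * Real.exp (-s ^ 2) := by
  have h := integral_comp_abs (f := fun y => Real.cos (s * y) * Real.exp (-y ^ 2 / 4))
  have heq : ∀ x : ℝ, Real.cos (s * |x|) * Real.exp (-|x| ^ 2 / 4)
      = Real.cos (s * x) * Real.exp (-x ^ 2 / 4) := by
    intro x
    rw [sq_abs]
    rcases le_or_gt 0 x with hx | hx
    · rw [abs_of_nonneg hx]
    · rw [abs_of_neg hx, mul_neg, Real.cos_neg]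
  simp_rw [heq] at h
  rw [cos_gaussian_real s] at h
  linarith

end Aux

noncomputable def sinc (x : ℝ) : ℝ := if x = 0 then 1 else Real.sin x / x

theorem mean_sinc_of_distance (M : ℝ) (hM : 0 < M) :
    ∫ r in Set.Ioi (0 : ℝ),
        _root_.sinc (Real.sqrt M * r) * ((1 / Real.sqrt (4 * π)) * r ^ 2 * Real.exp (-r ^ 2 / 4)) =
      Real.exp (-M) := by
  set s := Real.sqrt M with hs
  have hs0 : 0 < s := Real.sqrt_pos.mpr hM
  have hcongr : ∀ r ∈ Set.Ioi (0:ℝ),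
      _root_.sinc (s * r) * ((1 / Real.sqrt (4 * π)) * r ^ 2 * Real.exp (-r ^ 2 / 4))
        = (1 / (Real.sqrt (4 * π) * s)) * (Real.sin (s * r) * r * Real.exp (-r ^ 2 / 4)) := by
    intro r hr
    have hr0 : 0 < r := hr
    have hsr : s * r ≠ 0 := by positivity
    rw [_root_.sinc, if_neg hsr]
    field_simp
  rw [setIntegral_congr_fun measurableSet_Ioi hcongr, integral_const_mul,
    sin_gaussian_Ioi s, cos_gaussian_Ioi s]
  have h4π : Real.sqrt (4 * π) = 2 * Real.sqrt π := by
    rw [show (4:ℝ) * π = 2 ^ 2 * π by norm_num, Real.sqrt_mul (by positivity),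
      Real.sqrt_sq (by norm_num)]
  rw [h4π, show s ^ 2 = M from Real.sq_sqrt hM.le ▸ rfl]
  have hπ : Real.sqrt π ≠ 0 := by positivity
  field_simp
end

section
/- If R has density p_R(r) = (1/√(4π)) r² e^{-r²/4} on [0,∞), then for every M > 0, E[sinc(√M · R)²] = (1 − e^{−4M})/(4M), which equals e^{−2M} sinh(2M)/(2M) and is asymptotic to 1/(4M) as M → ∞. -/
open MeasureTheory Real Filter

noncomputable def secondMoment (M : ℝ) : ℝ :=
  ∫ r in Set.Ioi (0 : ℝ),
    _root_.sinc (Real.sqrt M * r) ^ 2 * ((1 / Real.sqrt (4 * π)) * r ^ 2 * Real.exp (-r ^ 2 / 4))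

open Complex in
lemma cos_gauss {b : ℝ} (hb : 0 < b) (t : ℝ) :
    ∫ x : ℝ, Real.cos (t * x) * Real.exp (-b * x ^ 2)
      = Real.sqrt (π / b) * Real.exp (-t ^ 2 / (4 * b)) := by
  have hbc : 0 < (b : ℂ).re := by simpa using hb
  have h := fourierIntegral_gaussian hbc (t : ℂ)
  have hint : Integrable fun x : ℝ => cexp (I * t * x) * cexp (-b * x ^ 2) := by
    have := integrable_cexp_quadratic hbc (I * t) 0
    refine this.congr (Eventually.of_forall fun x => ?_)
    show cexp _ = cexp _ * cexp _
    rw [show (-(b:ℂ) * x ^ 2 + I * t * x + 0 : ℂ) = I * t * x + -(b:ℂ) * x ^ 2 by ring,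
      Complex.exp_add]
  have hre : ∀ x : ℝ, (cexp (I * t * x) * cexp (-(b:ℂ) * (x:ℂ) ^ 2)).re
      = Real.cos (t * x) * Real.exp (-b * x ^ 2) := by
    intro x
    have e1 : -(b:ℂ) * (x:ℂ) ^ 2 = ((-b * x ^ 2 : ℝ) : ℂ) := by push_cast; ring
    have e2 : I * (t:ℂ) * (x:ℂ) = ((t * x : ℝ) : ℂ) * I := by push_cast; ring
    rw [e1, e2, ← Complex.ofReal_exp, mul_comm, Complex.re_ofReal_mul,
      Complex.exp_ofReal_mul_I_re]
    ring
  have hL : (∫ x : ℝ, cexp (I * t * x) * cexp (-b * x ^ 2)).re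
      = ∫ x : ℝ, Real.cos (t * x) * Real.exp (-b * x ^ 2) := by
    have := integral_re hint
    simp only [RCLike.re_to_complex] at this
    rw [← this]
    exact integral_congr_ae (Eventually.of_forall fun x => hre x)
  rw [← hL, h]
  have e3 : ((π / b : ℝ) : ℂ) ^ (1 / 2 : ℂ) = ((Real.sqrt (π / b) : ℝ) : ℂ) := by
    rw [Real.sqrt_eq_rpow, Complex.ofReal_cpow (by positivity)]
    push_cast; norm_num
  have e4 : cexp (-(t:ℂ) ^ 2 / (4 * b)) = ((Real.exp (-t ^ 2 / (4 * b)) : ℝ) : ℂ) := by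
    rw [show (-(t:ℂ) ^ 2 / (4 * b) : ℂ) = ((-t ^ 2 / (4 * b) : ℝ) : ℂ) by push_cast; ring,
      ← Complex.ofReal_exp]
  rw [show ((π:ℂ) / b) = ((π / b : ℝ) : ℂ) by push_cast; ring, e3, e4,
    ← Complex.ofReal_mul, Complex.ofReal_re]

lemma cos_gauss_int {b : ℝ} (hb : 0 < b) (t : ℝ) :
    Integrable fun x : ℝ => Real.cos (t * x) * Real.exp (-b * x ^ 2) := by
  refine (integrable_exp_neg_mul_sq hb).mono' ?_ (Eventually.of_forall fun x => ?_)
  · exact (Real.continuous_cos.comp (continuous_const.mul continuous_id)).mul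
      (Real.continuous_exp.comp (by continuity)) |>.aestronglyMeasurable
  · rw [norm_mul, Real.norm_eq_abs, Real.norm_eq_abs, Real.abs_exp]
    calc |Real.cos (t*x)| * Real.exp (-b*x^2) ≤ 1 * Real.exp (-b*x^2) := by
          gcongr; exact Real.abs_cos_le_one _
      _ = Real.exp (-b*x^2) := one_mul _

lemma cos_gauss_Ioi {b : ℝ} (hb : 0 < b) (t : ℝ) :
    ∫ x in Set.Ioi (0:ℝ), Real.cos (t * x) * Real.exp (-b * x ^ 2)
      = Real.sqrt (π / b) / 2 * Real.exp (-t ^ 2 / (4 * b)) := by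
  have habs : ∀ x : ℝ, Real.cos (t * |x|) * Real.exp (-b * |x| ^ 2)
      = Real.cos (t * x) * Real.exp (-b * x ^ 2) := by
    intro x
    rcases abs_choice x with h | h <;> rw [h]
    rw [mul_neg, Real.cos_neg, neg_sq]
  have := integral_comp_abs (f := fun x => Real.cos (t * x) * Real.exp (-b * x ^ 2))
  simp only [habs] at this
  rw [cos_gauss hb t] at this
  linarith

lemma secondMoment_eq {M : ℝ} (hM : 0 < M) :
    secondMoment M = (1 - Real.exp (-4 * M)) / (4 * M) := by
  have hsM : 0 < Real.sqrt M := Real.sqrt_pos.mpr hM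
  have hsP : 0 < Real.sqrt (4 * π) := Real.sqrt_pos.mpr (by positivity)
  rw [secondMoment]
  have hcongr : ∀ r ∈ Set.Ioi (0:ℝ),
      _root_.sinc (Real.sqrt M * r) ^ 2 *
        ((1 / Real.sqrt (4 * π)) * r ^ 2 * Real.exp (-r ^ 2 / 4))
      = (1 / Real.sqrt (4 * π)) * (1 / (2 * M)) * (Real.exp (-(1/4) * r ^ 2))
        - (1 / Real.sqrt (4 * π)) * (1 / (2 * M)) *
          (Real.cos ((2 * Real.sqrt M) * r) * Real.exp (-(1/4) * r ^ 2)) := by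
    intro r hr
    have hr0 : 0 < r := hr
    have hne : Real.sqrt M * r ≠ 0 := by positivity
    rw [_root_.sinc, if_neg hne, div_pow]
    have hsin : Real.sin (Real.sqrt M * r) ^ 2
        = (1 - Real.cos (2 * Real.sqrt M * r)) / 2 := by
      have h1 := Real.cos_two_mul (Real.sqrt M * r)
      have h2 := Real.sin_sq_add_cos_sq (Real.sqrt M * r)
      rw [show 2 * Real.sqrt M * r = 2 * (Real.sqrt M * r) by ring, h1]
      nlinarith
    have hM2 : (Real.sqrt M * r) ^ 2 = M * r ^ 2 := by
      rw [mul_pow, Real.sq_sqrt hM.le]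
    rw [hsin, hM2, show -(1/4) * r ^ 2 = -r^2/4 by ring]
    field_simp
  rw [setIntegral_congr_fun measurableSet_Ioi hcongr]
  have hb : (0:ℝ) < 1/4 := by norm_num
  have i1 : IntegrableOn (fun r => (1 / Real.sqrt (4 * π)) * (1 / (2 * M)) *
      (Real.exp (-(1/4) * r ^ 2))) (Set.Ioi 0) :=
    ((integrable_exp_neg_mul_sq hb).const_mul _).integrableOn
  have i2 : IntegrableOn (fun r => (1 / Real.sqrt (4 * π)) * (1 / (2 * M)) *
      (Real.cos ((2 * Real.sqrt M) * r) * Real.exp (-(1/4) * r ^ 2))) (Set.Ioi 0) :=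
    ((cos_gauss_int hb (2 * Real.sqrt M)).const_mul _).integrableOn
  rw [integral_sub i1 i2, integral_const_mul, integral_const_mul,
    integral_gaussian_Ioi (1/4), cos_gauss_Ioi hb (2 * Real.sqrt M)]
  have hsq : (2 * Real.sqrt M) ^ 2 = 4 * M := by
    rw [mul_pow, Real.sq_sqrt hM.le]; ring
  have hpi : Real.sqrt (π / (1/4)) = Real.sqrt (4 * π) := by rw [show π / (1/4) = 4 * π by ring]
  rw [hpi, show -(2 * Real.sqrt M) ^ 2 / (4 * (1/4)) = -4 * M by rw [hsq]; ring]
  field_simp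
  ring

theorem second_moment_sinc_of_distance :
    (∀ M : ℝ, 0 < M →
      secondMoment M = (1 - Real.exp (-4 * M)) / (4 * M) ∧
      secondMoment M = Real.exp (-2 * M) * Real.sinh (2 * M) / (2 * M)) ∧
    Asymptotics.IsEquivalent atTop secondMoment (fun M => 1 / (4 * M)) := by
  constructor
  · intro M hM
    refine ⟨secondMoment_eq hM, (secondMoment_eq hM).trans ?_⟩
    rw [Real.sinh_eq]
    have h1 : Real.exp (-(2*M)) * Real.exp (2*M) = 1 := by
      rw [← Real.exp_add]; simp
    have h2 : Real.exp (-(2*M)) * Real.exp (-(2*M)) = Real.exp (-(4*M)) := by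
      rw [← Real.exp_add]; ring_nf
    rw [show (-2:ℝ) * M = -(2*M) by ring, show (-4:ℝ) * M = -(4*M) by ring]
    field_simp
    linear_combination (norm := ring_nf) 4 * h2 - 4 * h1
  · rw [Asymptotics.isEquivalent_iff_tendsto_one]
    · have hev : (secondMoment / fun M => 1 / (4 * M)) =ᶠ[atTop]
          (fun M => 1 - Real.exp (-4 * M)) := by
        filter_upwards [eventually_gt_atTop (0:ℝ)] with M hM
        simp only [Pi.div_apply]
        rw [secondMoment_eq hM]
        field_simp
      rw [tendsto_congr' hev]
      have h4 : Tendsto (fun M : ℝ => -(4 * M)) atTop atBot :=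
        tendsto_neg_atTop_atBot.comp (tendsto_id.const_mul_atTop (by norm_num))
      have : Tendsto (fun M : ℝ => Real.exp (-4 * M)) atTop (nhds 0) := by
        simp only [neg_mul]
        exact Real.tendsto_exp_atBot.comp h4
      have := (tendsto_const_nhds (x := (1:ℝ)) (f := atTop)).sub this
      simpa using this
    · filter_upwards [eventually_gt_atTop (0:ℝ)] with M hM
      positivity
end

section
/- If (R, R') have joint density p(r, r') = (2/(√3 π)) r e^{-r²/3} r' e^{-r'²/3} sinh(r r'/3) on [0,∞)², then for every M > 0, E[sinc(√M R) · sinc(√M R')] = e^{−2M} sinh(M)/M, which is asymptotic to e^{−M}/(2M) as M → ∞. -/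
open MeasureTheory Real Filter

noncomputable def corrMoment (M : ℝ) : ℝ :=
  ∫ q in (Set.Ioi (0 : ℝ)) ×ˢ (Set.Ioi (0 : ℝ)),
    _root_.sinc (Real.sqrt M * q.1) * _root_.sinc (Real.sqrt M * q.2) *
      ((2 / (Real.sqrt 3 * π)) * q.1 * Real.exp (-q.1 ^ 2 / 3) * q.2 *
        Real.exp (-q.2 ^ 2 / 3) * Real.sinh (q.1 * q.2 / 3))


lemma aux_e1 (b c s : ℝ) : ∀ x : ℝ, (((-b*x^2 + c*x : ℝ) : ℂ) + ((s*x : ℝ) : ℂ) * Complex.I)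
    = (-(b:ℂ)) * x^2 + (↑c + ↑s * Complex.I) * x + 0 := by intro x; push_cast; ring

lemma aux_integrable_g {b : ℝ} (hb : 0 < b) (c s : ℝ) :
    Integrable fun x : ℝ => Complex.exp (((-b*x^2 + c*x : ℝ) : ℂ) + ((s*x : ℝ) : ℂ) * Complex.I) := by
  simp_rw [aux_e1 b c s]
  exact integrable_cexp_quadratic (by simpa using hb) _ _

lemma aux_integral_g {b : ℝ} (hb : 0 < b) (c s : ℝ) :
    ∫ x : ℝ, Complex.exp (((-b*x^2 + c*x : ℝ) : ℂ) + ((s*x : ℝ) : ℂ) * Complex.I)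
      = (Real.sqrt (π / b) : ℂ) *
          Complex.exp ((((c^2 - s^2)/(4*b) : ℝ) : ℂ) + ((s*c/(2*b) : ℝ) : ℂ) * Complex.I) := by
  have hb' : ((-(b:ℂ))).re < 0 := by simpa using hb
  simp_rw [aux_e1 b c s]
  rw [integral_cexp_quadratic hb' (↑c + ↑s * Complex.I) 0]
  have hb0 : (b:ℂ) ≠ 0 := by exact_mod_cast hb.ne'
  have hS : ((π:ℂ) / -(-(b:ℂ)))^(1/2 : ℂ) = ((Real.sqrt (π / b) : ℝ) : ℂ) := by
    rw [neg_neg, Real.sqrt_eq_rpow, Complex.ofReal_cpow (by positivity)]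
    push_cast
    norm_num
  have hsq : ((c:ℂ) + s*Complex.I)^2 = ((c^2 - s^2 : ℝ) : ℂ) + ((2*s*c : ℝ) : ℂ)*Complex.I := by
    push_cast; linear_combination (s:ℂ)^2 * Complex.I_sq
  have hw : (0:ℂ) - (↑c + ↑s*Complex.I)^2/(4 * (-(b:ℂ)))
      = (((c^2-s^2)/(4*b) : ℝ) : ℂ) + ((s*c/(2*b) : ℝ) : ℂ) * Complex.I := by
    rw [hsq]
    push_cast
    field_simp
    ring
  rw [hS, hw]

lemma aux_exp_form (u v : ℝ) :
    Complex.exp (((u : ℝ) : ℂ) + ((v : ℝ) : ℂ) * Complex.I)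
      = ((Real.exp u : ℝ) : ℂ) * (((Real.cos v : ℝ) : ℂ) + ((Real.sin v : ℝ) : ℂ) * Complex.I) := by
  rw [Complex.exp_add, Complex.exp_mul_I, Complex.ofReal_exp, Complex.ofReal_cos,
    Complex.ofReal_sin]

lemma aux_sin_decomp (b c s x : ℝ) :
    ((Real.exp (-b*x^2 + c*x) * Real.sin (s*x) : ℝ) : ℂ)
      = (Complex.exp (((-b*x^2 + c*x : ℝ) : ℂ) + ((s*x : ℝ) : ℂ) * Complex.I)
          - Complex.exp (((-b*x^2 + c*x : ℝ) : ℂ) + ((-s*x : ℝ) : ℂ) * Complex.I)) / (2*Complex.I) := by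
  rw [aux_exp_form, aux_exp_form, show (-s*x : ℝ) = -(s*x) by ring, Real.cos_neg, Real.sin_neg]
  rw [eq_div_iff (by simp [Complex.I_ne_zero] : (2*Complex.I) ≠ 0)]
  push_cast
  ring

lemma aux_cos_decomp (b c s x : ℝ) :
    ((Real.exp (-b*x^2 + c*x) * Real.cos (s*x) : ℝ) : ℂ)
      = (Complex.exp (((-b*x^2 + c*x : ℝ) : ℂ) + ((s*x : ℝ) : ℂ) * Complex.I)
          + Complex.exp (((-b*x^2 + c*x : ℝ) : ℂ) + ((-s*x : ℝ) : ℂ) * Complex.I)) / 2 := by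
  rw [aux_exp_form, aux_exp_form, show (-s*x : ℝ) = -(s*x) by ring, Real.cos_neg, Real.sin_neg]
  push_cast
  ring

lemma aux_integrable_sin {b : ℝ} (hb : 0 < b) (c s : ℝ) :
    Integrable fun x : ℝ => Real.exp (-b*x^2 + c*x) * Real.sin (s*x) := by
  have h := ((aux_integrable_g hb c s).sub (aux_integrable_g hb c (-s))).div_const (2*Complex.I)
  have h2 : Integrable (fun x : ℝ => ((Real.exp (-b*x^2 + c*x) * Real.sin (s*x) : ℝ) : ℂ)) := by
    refine h.congr (ae_of_all _ fun x => ?_)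
    simp only [Pi.sub_apply]
    exact (aux_sin_decomp b c s x).symm
  simpa only [RCLike.re_to_complex, Complex.ofReal_re] using h2.re

lemma aux_integrable_cos {b : ℝ} (hb : 0 < b) (c s : ℝ) :
    Integrable fun x : ℝ => Real.exp (-b*x^2 + c*x) * Real.cos (s*x) := by
  have h := ((aux_integrable_g hb c s).add (aux_integrable_g hb c (-s))).div_const 2
  have h2 : Integrable (fun x : ℝ => ((Real.exp (-b*x^2 + c*x) * Real.cos (s*x) : ℝ) : ℂ)) := by
    refine h.congr (ae_of_all _ fun x => ?_)
    simp only [Pi.add_apply]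
    exact (aux_cos_decomp b c s x).symm
  simpa only [RCLike.re_to_complex, Complex.ofReal_re] using h2.re

lemma aux_integral_sin {b : ℝ} (hb : 0 < b) (c s : ℝ) :
    ∫ x : ℝ, Real.exp (-b*x^2 + c*x) * Real.sin (s*x)
      = Real.sqrt (π/b) * Real.exp ((c^2 - s^2)/(4*b)) * Real.sin (s*c/(2*b)) := by
  have h2 : ∫ x : ℝ, ((Real.exp (-b*x^2 + c*x) * Real.sin (s*x) : ℝ) : ℂ)
      = ((∫ x : ℝ, Real.exp (-b*x^2 + c*x) * Real.sin (s*x) : ℝ) : ℂ) := integral_ofReal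
  have h1 : ∫ x : ℝ, ((Real.exp (-b*x^2 + c*x) * Real.sin (s*x) : ℝ) : ℂ)
      = ((Real.sqrt (π/b) * Real.exp ((c^2 - s^2)/(4*b)) * Real.sin (s*c/(2*b)) : ℝ) : ℂ) := by
    simp_rw [aux_sin_decomp b c s]
    rw [integral_div, integral_sub (aux_integrable_g hb c s) (aux_integrable_g hb c (-s)),
      aux_integral_g hb c s, aux_integral_g hb c (-s)]
    rw [aux_exp_form, aux_exp_form]
    have e1 : ((-s)^2 : ℝ) = s^2 := by ring
    have e2 : ((-s)*c/(2*b) : ℝ) = -(s*c/(2*b)) := by ring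
    rw [e1, e2, Real.cos_neg, Real.sin_neg]
    rw [div_eq_iff (by simp [Complex.I_ne_zero] : (2*Complex.I) ≠ 0)]
    push_cast
    ring
  rw [h1] at h2
  exact_mod_cast h2.symm

lemma aux_integral_cos {b : ℝ} (hb : 0 < b) (c s : ℝ) :
    ∫ x : ℝ, Real.exp (-b*x^2 + c*x) * Real.cos (s*x)
      = Real.sqrt (π/b) * Real.exp ((c^2 - s^2)/(4*b)) * Real.cos (s*c/(2*b)) := by
  have h2 : ∫ x : ℝ, ((Real.exp (-b*x^2 + c*x) * Real.cos (s*x) : ℝ) : ℂ)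
      = ((∫ x : ℝ, Real.exp (-b*x^2 + c*x) * Real.cos (s*x) : ℝ) : ℂ) := integral_ofReal
  have h1 : ∫ x : ℝ, ((Real.exp (-b*x^2 + c*x) * Real.cos (s*x) : ℝ) : ℂ)
      = ((Real.sqrt (π/b) * Real.exp ((c^2 - s^2)/(4*b)) * Real.cos (s*c/(2*b)) : ℝ) : ℂ) := by
    simp_rw [aux_cos_decomp b c s]
    rw [integral_div, integral_add (aux_integrable_g hb c s) (aux_integrable_g hb c (-s)),
      aux_integral_g hb c s, aux_integral_g hb c (-s)]
    rw [aux_exp_form, aux_exp_form]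
    have e1 : ((-s)^2 : ℝ) = s^2 := by ring
    have e2 : ((-s)*c/(2*b) : ℝ) = -(s*c/(2*b)) := by ring
    rw [e1, e2, Real.cos_neg, Real.sin_neg]
    push_cast
    ring
  rw [h1] at h2
  exact_mod_cast h2.symm

lemma aux_even_Ioi {f : ℝ → ℝ} (hf : Integrable f) (he : ∀ x, f (-x) = f x) :
    ∫ x in Set.Ioi (0:ℝ), f x = (∫ x, f x) / 2 := by
  have h1 : ∫ x in Set.Iic (0:ℝ), f x = ∫ x in Set.Ioi (0:ℝ), f x := by
    have h := integral_comp_neg_Iic (0:ℝ) f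
    simp_rw [he] at h
    rwa [neg_zero] at h
  have h2 := intervalIntegral.integral_Iic_add_Ioi (b := (0:ℝ)) hf.integrableOn hf.integrableOn
  rw [h1] at h2
  linarith

lemma aux_inner_pt (a r : ℝ) (y : ℝ) :
    Real.sin (a*y) * Real.exp (-y^2/3) * Real.sinh (r*y/3)
      = (Real.exp (-(1/3)*y^2 + (r/3)*y) * Real.sin (a*y)
         - Real.exp (-(1/3)*y^2 + (-(r/3))*y) * Real.sin (a*y)) / 2 := by
  rw [show (-(1/3)*y^2 + (r/3)*y : ℝ) = (-y^2/3) + (r*y/3) by ring,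
    show (-(1/3)*y^2 + (-(r/3))*y : ℝ) = (-y^2/3) + (-(r*y/3)) by ring,
    Real.exp_add, Real.exp_add, Real.sinh_eq]
  ring

lemma aux_integrable_inner (a r : ℝ) :
    Integrable fun y : ℝ => Real.sin (a*y) * Real.exp (-y^2/3) * Real.sinh (r*y/3) := by
  have h := ((aux_integrable_sin (b := 1/3) (by norm_num) (r/3) a).sub
    (aux_integrable_sin (b := 1/3) (by norm_num) (-(r/3)) a)).div_const 2
  refine h.congr (ae_of_all _ fun y => ?_)
  simp only [Pi.sub_apply]
  exact (aux_inner_pt a r y).symm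

lemma aux_inner (a r : ℝ) :
    ∫ y in Set.Ioi (0:ℝ), Real.sin (a*y) * Real.exp (-y^2/3) * Real.sinh (r*y/3)
      = Real.sqrt (3*π) / 2 * (Real.exp (r^2/12 - 3*a^2/4) * Real.sin (a*r/2)) := by
  rw [aux_even_Ioi (aux_integrable_inner a r) (fun y => by
    simp only [mul_neg, neg_neg, Real.sin_neg, neg_sq, neg_div, Real.sinh_neg]
    ring)]
  simp_rw [aux_inner_pt a r]
  rw [integral_div, integral_sub (aux_integrable_sin (by norm_num) (r/3) a)
      (aux_integrable_sin (by norm_num) (-(r/3)) a),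
    aux_integral_sin (by norm_num : (0:ℝ) < 1/3) (r/3) a,
    aux_integral_sin (by norm_num : (0:ℝ) < 1/3) (-(r/3)) a]
  rw [show (a*(-(r/3))/(2*(1/3)) : ℝ) = -(a*r/2) by ring, Real.sin_neg,
    show (a*(r/3)/(2*(1/3)) : ℝ) = a*r/2 by ring,
    show (((r/3)^2 - a^2)/(4*(1/3)) : ℝ) = r^2/12 - 3*a^2/4 by ring,
    show (((-(r/3))^2 - a^2)/(4*(1/3)) : ℝ) = r^2/12 - 3*a^2/4 by ring,
    show (π/(1/3) : ℝ) = 3*π by ring]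
  ring

lemma aux_outer_pt (a x : ℝ) :
    Real.sin (a*x) * Real.exp (-x^2/4) * Real.sin (a*x/2)
      = (Real.exp (-(1/4)*x^2 + 0*x) * Real.cos ((a/2)*x)
         - Real.exp (-(1/4)*x^2 + 0*x) * Real.cos ((3*a/2)*x)) / 2 := by
  have h := Real.cos_sub_cos ((a/2)*x) ((3*a/2)*x)
  rw [show (((a/2)*x + (3*a/2)*x)/2 : ℝ) = a*x by ring,
    show (((a/2)*x - (3*a/2)*x)/2 : ℝ) = -(a*x/2) by ring, Real.sin_neg] at h
  rw [show (-(1/4)*x^2 + 0*x : ℝ) = -x^2/4 by ring]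
  linear_combination (-(Real.exp (-x^2/4))/2) * h

lemma aux_outer (a : ℝ) :
    ∫ x in Set.Ioi (0:ℝ), Real.sin (a*x) * Real.exp (-x^2/4) * Real.sin (a*x/2)
      = Real.sqrt π / 2 * (Real.exp (-a^2/4) - Real.exp (-9*a^2/4)) := by
  have hint := ((aux_integrable_cos (b := 1/4) (by norm_num) 0 (a/2)).sub
    (aux_integrable_cos (b := 1/4) (by norm_num) 0 (3*a/2))).div_const 2
  have hint2 : Integrable fun x : ℝ => Real.sin (a*x) * Real.exp (-x^2/4) * Real.sin (a*x/2) := by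
    refine hint.congr (ae_of_all _ fun x => ?_)
    simp only [Pi.sub_apply]
    exact (aux_outer_pt a x).symm
  rw [aux_even_Ioi hint2 (fun x => by
    simp only [mul_neg, Real.sin_neg, neg_sq, neg_div]
    ring)]
  simp_rw [aux_outer_pt a]
  rw [integral_div, integral_sub (aux_integrable_cos (by norm_num) 0 (a/2))
      (aux_integrable_cos (by norm_num) 0 (3*a/2)),
    aux_integral_cos (by norm_num : (0:ℝ) < 1/4) 0 (a/2),
    aux_integral_cos (by norm_num : (0:ℝ) < 1/4) 0 (3*a/2)]
  rw [show ((a/2)*0/(2*(1/4)) : ℝ) = 0 by ring, show ((3*a/2)*0/(2*(1/4)) : ℝ) = 0 by ring,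
    Real.cos_zero,
    show ((0^2 - (a/2)^2)/(4*(1/4)) : ℝ) = -a^2/4 by ring,
    show ((0^2 - (3*a/2)^2)/(4*(1/4)) : ℝ) = -9*a^2/4 by ring,
    show (π/(1/4) : ℝ) = 4*π by ring,
    show (4*π : ℝ) = 2^2*π by ring, Real.sqrt_mul (by positivity : (0:ℝ) ≤ 2^2)]
  rw [show Real.sqrt (2^2) = 2 by rw [Real.sqrt_sq (by norm_num : (0:ℝ) ≤ 2)]]
  ring

lemma aux_key (M : ℝ) (hM : 0 < M) :
    corrMoment M = (Real.exp (-M) - Real.exp (-3*M)) / (2*M) := by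
  have ha : 0 < Real.sqrt M := Real.sqrt_pos.mpr hM
  set a := Real.sqrt M with ha_def
  have ha2 : a^2 = M := Real.sq_sqrt hM.le
  have hS : MeasurableSet ((Set.Ioi (0:ℝ)) ×ˢ (Set.Ioi (0:ℝ))) :=
    measurableSet_Ioi.prod measurableSet_Ioi
  have h3 : (0:ℝ) < Real.sqrt 3 := Real.sqrt_pos.mpr (by norm_num)
  -- Step 1: rewrite integrand
  have step1 : corrMoment M = ∫ q in (Set.Ioi (0:ℝ)) ×ˢ (Set.Ioi (0:ℝ)),
      (2/(Real.sqrt 3 * π * M)) * (Real.sin (a*q.1) * Real.exp (-q.1^2/3) *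
        (Real.sin (a*q.2) * Real.exp (-q.2^2/3) * Real.sinh (q.1*q.2/3))) := by
    rw [corrMoment]
    apply setIntegral_congr_fun hS
    intro q hq
    obtain ⟨h1, h2⟩ := hq
    simp only [Set.mem_Ioi] at h1 h2
    have hq1 : a*q.1 ≠ 0 := by positivity
    have hq2 : a*q.2 ≠ 0 := by positivity
    simp only [_root_.sinc]
    rw [if_neg hq1, if_neg hq2]
    rw [← ha2]
    field_simp
    rw [Real.sqrt_sq ha.le]
  -- Step 2: integrability
  have hGint : IntegrableOn (fun q : ℝ×ℝ => Real.sin (a*q.1) * Real.exp (-q.1^2/3) *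
      (Real.sin (a*q.2) * Real.exp (-q.2^2/3) * Real.sinh (q.1*q.2/3)))
      ((Set.Ioi (0:ℝ)) ×ˢ (Set.Ioi (0:ℝ))) (volume.prod volume) := by
    have hbound : Integrable (fun q : ℝ×ℝ => Real.exp (-(1/6:ℝ)*q.1^2) * Real.exp (-(1/6:ℝ)*q.2^2))
        (volume.prod volume) :=
      (integrable_exp_neg_mul_sq (by norm_num)).mul_prod (integrable_exp_neg_mul_sq (by norm_num))
    refine Integrable.mono' hbound.integrableOn
      ((Continuous.aestronglyMeasurable (by fun_prop)).restrict) ?_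
    rw [ae_restrict_iff' hS]
    filter_upwards with q hq
    obtain ⟨h1, h2⟩ := hq
    simp only [Set.mem_Ioi] at h1 h2
    have hsh : |Real.sinh (q.1*q.2/3)| ≤ Real.exp (q.1*q.2/3) := by
      rw [abs_of_nonneg (Real.sinh_nonneg_iff.mpr (by positivity))]
      rw [Real.sinh_eq]
      have := Real.exp_pos (-(q.1*q.2/3))
      have := Real.exp_pos (q.1*q.2/3)
      linarith
    calc ‖Real.sin (a*q.1) * Real.exp (-q.1^2/3) *
        (Real.sin (a*q.2) * Real.exp (-q.2^2/3) * Real.sinh (q.1*q.2/3))‖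
        = |Real.sin (a*q.1)| * Real.exp (-q.1^2/3) *
          (|Real.sin (a*q.2)| * Real.exp (-q.2^2/3) * |Real.sinh (q.1*q.2/3)|) := by
          simp [Real.norm_eq_abs, abs_mul, Real.abs_exp]
      _ ≤ 1 * Real.exp (-q.1^2/3) * (1 * Real.exp (-q.2^2/3) * Real.exp (q.1*q.2/3)) := by
          gcongr
          · exact Real.abs_sin_le_one _
          · exact Real.abs_sin_le_one _
      _ = Real.exp (-q.1^2/3 + (-q.2^2/3 + q.1*q.2/3)) := by
          rw [Real.exp_add, Real.exp_add]; ring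
      _ ≤ Real.exp (-(1/6:ℝ)*q.1^2 + -(1/6:ℝ)*q.2^2) := by
          rw [Real.exp_le_exp]; nlinarith [sq_nonneg (q.1 - q.2)]
      _ = Real.exp (-(1/6:ℝ)*q.1^2) * Real.exp (-(1/6:ℝ)*q.2^2) := Real.exp_add _ _
  -- Step 3: Fubini and 1D integrals
  rw [step1, integral_const_mul]
  rw [Measure.volume_eq_prod, setIntegral_prod _ hGint]
  have hinner : (fun x : ℝ => ∫ y in Set.Ioi (0:ℝ), Real.sin (a*x) * Real.exp (-x^2/3) *
        (Real.sin (a*y) * Real.exp (-y^2/3) * Real.sinh (x*y/3)))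
      = fun x : ℝ => (Real.sqrt (3*π) / 2 * Real.exp (-3*a^2/4)) *
        (Real.sin (a*x) * Real.exp (-x^2/4) * Real.sin (a*x/2)) := by
    funext x
    rw [integral_const_mul, aux_inner a x]
    have e1 : Real.exp (x^2/12 - 3*a^2/4) = Real.exp (x^2/12) * Real.exp (-3*a^2/4) := by
      rw [← Real.exp_add]; ring_nf
    have e2 : Real.exp (-x^2/3) * Real.exp (x^2/12) = Real.exp (-x^2/4) := by
      rw [← Real.exp_add]; ring_nf
    rw [e1]
    linear_combination (Real.sin (a*x) * Real.sin (a*x/2) * Real.sqrt (3*π) / 2 *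
      Real.exp (-3*a^2/4)) * e2
  rw [hinner, integral_const_mul, aux_outer a]
  -- Final algebra
  have m1 : Real.exp (-3*a^2/4) * Real.exp (-a^2/4) = Real.exp (-a^2) := by
    rw [← Real.exp_add]; ring_nf
  have m2 : Real.exp (-3*a^2/4) * Real.exp (-9*a^2/4) = Real.exp (-3*a^2) := by
    rw [← Real.exp_add]; ring_nf
  have hs3 : Real.sqrt (3*π) = Real.sqrt 3 * Real.sqrt π := Real.sqrt_mul (by norm_num) _
  have hpi : Real.sqrt π * Real.sqrt π = π := Real.mul_self_sqrt Real.pi_pos.le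
  rw [← ha2, hs3]
  generalize hE3 : Real.exp (-3*a^2/4) = E3 at m1 m2 ⊢
  generalize hE1 : Real.exp (-a^2/4) = E1 at m1 ⊢
  generalize hE9 : Real.exp (-9*a^2/4) = E9 at m2 ⊢
  generalize hF1 : Real.exp (-a^2) = F1 at m1 ⊢
  generalize hF3 : Real.exp (-3*a^2) = F3 at m2 ⊢
  field_simp
  rw [← m1, ← m2]
  linear_combination (E3*E1 - E3*E9) * hpi

theorem correlated_sinc_moment :
    (∀ M : ℝ, 0 < M → corrMoment M = Real.exp (-2 * M) * Real.sinh M / M) ∧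
    Asymptotics.IsEquivalent atTop corrMoment (fun M => Real.exp (-M) / (2 * M)) := by
  have hsinh : ∀ M : ℝ, Real.exp (-2 * M) * Real.sinh M / M
      = (Real.exp (-M) - Real.exp (-3*M)) / (2*M) := by
    intro M
    have e1 : Real.exp (-2*M) * Real.exp M = Real.exp (-M) := by rw [← Real.exp_add]; ring_nf
    have e2 : Real.exp (-2*M) * Real.exp (-M) = Real.exp (-3*M) := by rw [← Real.exp_add]; ring_nf
    rw [Real.sinh_eq, show Real.exp (-2*M) * ((Real.exp M - Real.exp (-M))/2) / M
      = (Real.exp (-2*M)*Real.exp M - Real.exp (-2*M)*Real.exp (-M))/(2*M) by ring, e1, e2]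
  constructor
  · intro M hM
    rw [aux_key M hM, hsinh]
  · rw [Asymptotics.isEquivalent_iff_tendsto_one]
    · have hlim : Tendsto (fun M : ℝ => 1 - Real.exp (-2*M)) atTop (nhds 1) := by
        have h2 : Tendsto (fun M : ℝ => 2*M) atTop atTop :=
          Tendsto.const_mul_atTop (by norm_num) tendsto_id
        have := (Real.tendsto_exp_neg_atTop_nhds_zero.comp h2)
        have h3 : Tendsto (fun M : ℝ => Real.exp (-2*M)) atTop (nhds 0) := by
          refine this.congr fun M => ?_
          simp [Function.comp]
        simpa using tendsto_const_nhds.sub h3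
      refine Tendsto.congr' ?_ hlim
      filter_upwards [eventually_gt_atTop (0:ℝ)] with M hM
      have hx := Real.exp_pos (-M)
      rw [Pi.div_apply, aux_key M hM]
      have e2 : Real.exp (-2*M) * Real.exp (-M) = Real.exp (-3*M) := by
        rw [← Real.exp_add]; ring_nf
      generalize hA : Real.exp (-M) = A at e2 hx ⊢
      generalize hD : Real.exp (-2*M) = D at e2 ⊢
      generalize hC : Real.exp (-3*M) = C at e2 ⊢
      field_simp
      linear_combination -e2
    · filter_upwards [eventually_gt_atTop (0:ℝ)] with M hM
      have := Real.exp_pos (-M)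
      positivity
end

section
/- For integers m ≥ 4, as M → ∞ the moment E[sinc(√M · R)^m] is asymptotic to a_m · M^{−3/2}, where a_m = (1/√(4π)) ∫_0^∞ r² (sin r / r)^m dr, and the integral converges. -/
open MeasureTheory Real Filter

section aux
open Set Topology

lemma sinc_abs_le_one {x : ℝ} : |Real.sin x / x| ≤ 1 := by
  rcases eq_or_ne x 0 with h | h
  · simp [h]
  · rw [abs_div, div_le_one (abs_pos.2 h)]
    exact Real.abs_sin_le_abs

lemma sinc_abs_le_inv {x : ℝ} (hx : 0 < x) : |Real.sin x / x| ≤ 1 / x := by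
  rw [abs_div, abs_of_pos hx]
  gcongr
  exact Real.abs_sin_le_one x

lemma g_meas (m : ℕ) : Measurable (fun r : ℝ => r ^ 2 * (Real.sin r / r) ^ m) :=
  ((measurable_id.pow_const 2).mul ((Real.measurable_sin.div measurable_id).pow_const m))

lemma g_norm_le {m : ℕ} {x : ℝ} (hx0 : 0 < x) :
    ‖x ^ 2 * (Real.sin x / x) ^ m‖ = x ^ 2 * |Real.sin x / x| ^ m := by
  rw [norm_mul, norm_pow, norm_pow, Real.norm_eq_abs, Real.norm_eq_abs, abs_of_pos hx0]

lemma g_bound_tail (m : ℕ) (hm : 4 ≤ m) {x : ℝ} (hx : 1 ≤ x) :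
    ‖x ^ 2 * (Real.sin x / x) ^ m‖ ≤ x ^ ((2:ℝ) - m) := by
  have hx0 : (0:ℝ) < x := lt_of_lt_of_le one_pos hx
  have key : ‖x ^ 2 * (Real.sin x / x) ^ m‖ ≤ x ^ 2 * (1/x) ^ m := by
    rw [g_norm_le hx0]
    exact mul_le_mul_of_nonneg_left
      (pow_le_pow_left₀ (abs_nonneg _) (sinc_abs_le_inv hx0) m) (by positivity)
  have heq : x ^ 2 * (1/x) ^ m = x ^ ((2:ℝ) - m) := by
    have h2 : x ^ ((2:ℝ) - m) = x ^ 2 / x ^ m := by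
      rw [Real.rpow_sub hx0, Real.rpow_natCast, Real.rpow_two]
    rw [h2, div_pow, one_pow]
    field_simp
  exact key.trans_eq heq

lemma g_integrable (m : ℕ) (hm : 4 ≤ m) :
    IntegrableOn (fun r : ℝ => r ^ 2 * (Real.sin r / r) ^ m) (Set.Ioi 0) := by
  have hmeas : AEStronglyMeasurable (fun r : ℝ => r ^ 2 * (Real.sin r / r) ^ m)
      (volume.restrict (Set.Ioc (0:ℝ) 1)) := (g_meas m).aestronglyMeasurable
  have hmeas2 : AEStronglyMeasurable (fun r : ℝ => r ^ 2 * (Real.sin r / r) ^ m)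
      (volume.restrict (Set.Ioi (1:ℝ))) := (g_meas m).aestronglyMeasurable
  have h1 : IntegrableOn (fun r : ℝ => r ^ 2 * (Real.sin r / r) ^ m) (Set.Ioc 0 1) := by
    have hc : IntegrableOn (fun _ : ℝ => (1:ℝ)) (Set.Ioc (0:ℝ) 1) :=
      integrableOn_const measure_Ioc_lt_top.ne
    apply Integrable.mono hc hmeas
    filter_upwards [ae_restrict_mem measurableSet_Ioc] with x hx
    have hx0 : 0 < x := hx.1
    have h : ‖x ^ 2 * (Real.sin x / x) ^ m‖ ≤ x ^ 2 * 1 := by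
      rw [g_norm_le hx0]
      exact mul_le_mul_of_nonneg_left
        (pow_le_one₀ (abs_nonneg _) sinc_abs_le_one) (by positivity)
    have h2 : x ^ 2 * 1 ≤ 1 := by nlinarith [hx.1.le, hx.2]
    simpa using h.trans h2
  have h2 : IntegrableOn (fun r : ℝ => r ^ 2 * (Real.sin r / r) ^ m) (Set.Ioi 1) := by
    apply Integrable.mono (integrableOn_Ioi_rpow_of_lt (by norm_num : (-2:ℝ) < -1) one_pos) hmeas2
    filter_upwards [ae_restrict_mem measurableSet_Ioi] with x hx
    have hx1 : (1:ℝ) < x := hx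
    have hle : x ^ ((2:ℝ) - m) ≤ x ^ (-2:ℝ) := by
      apply Real.rpow_le_rpow_of_exponent_le hx1.le
      have : (4:ℝ) ≤ m := by exact_mod_cast hm
      linarith
    calc ‖x ^ 2 * (Real.sin x / x) ^ m‖ ≤ x ^ ((2:ℝ) - m) := g_bound_tail m hm hx1.le
    _ ≤ x ^ (-2:ℝ) := hle
    _ ≤ ‖x ^ (-2:ℝ)‖ := le_abs_self _
  have := h1.union h2
  rwa [Set.Ioc_union_Ioi_eq_Ioi (by norm_num : (0:ℝ) ≤ 1)] at this

-- lower bound on the head integral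
lemma head_lb (m : ℕ) (hm : 4 ≤ m) :
    (2/π)^m * ((π/2)^3/3) ≤ ∫ r in Set.Ioc (0:ℝ) (π/2), r ^ 2 * (Real.sin r / r) ^ m := by
  have hπ := Real.pi_pos
  have h1 : ∫ r in Set.Ioc (0:ℝ) (π/2), (2/π)^m * r ^ 2 = (2/π)^m * ((π/2)^3/3) := by
    rw [← intervalIntegral.integral_of_le (by positivity), intervalIntegral.integral_const_mul,
      integral_pow]
    norm_num
  rw [← h1]
  apply setIntegral_mono_on
  · exact (continuous_const.mul (continuous_pow 2)).integrableOn_Ioc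
  · exact (g_integrable m hm).mono_set (fun x hx => Set.Ioc_subset_Ioi_self hx)
  · exact measurableSet_Ioc
  · intro x hx
    have hx0 : 0 < x := hx.1
    have hs : 2/π ≤ Real.sin x / x := by
      rw [le_div_iff₀ hx0]
      exact Real.mul_le_sin hx0.le hx.2
    have h2 : ((2:ℝ)/π) ^ m ≤ (Real.sin x / x) ^ m :=
      pow_le_pow_left₀ (by positivity) hs m
    calc (2/π)^m * x ^ 2 ≤ (Real.sin x / x) ^ m * x ^ 2 := by
          exact mul_le_mul_of_nonneg_right h2 (by positivity)
    _ = x ^ 2 * (Real.sin x / x) ^ m := by ring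

lemma exp_lt (m : ℕ) (hm : 4 ≤ m) : (2:ℝ) - m < -1 := by
  have : (4:ℝ) ≤ m := by exact_mod_cast hm
  linarith

lemma tail_lb (m : ℕ) (hm : 4 ≤ m) :
    -(π^((3:ℝ)-m)/((m:ℝ)-3)) ≤ ∫ r in Set.Ioi π, r ^ 2 * (Real.sin r / r) ^ m := by
  have hπ := Real.pi_pos
  have h1pi : (1:ℝ) ≤ π := by linarith [Real.pi_gt_three]
  have hm4 : (4:ℝ) ≤ m := by exact_mod_cast hm
  have hint : IntegrableOn (fun r : ℝ => r ^ 2 * (Real.sin r / r) ^ m) (Set.Ioi π) :=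
    (g_integrable m hm).mono_set (Set.Ioi_subset_Ioi hπ.le)
  have h1 : ‖∫ r in Set.Ioi π, r ^ 2 * (Real.sin r / r) ^ m‖
      ≤ ∫ r in Set.Ioi π, ‖r ^ 2 * (Real.sin r / r) ^ m‖ :=
    norm_integral_le_integral_norm _
  have h2 : ∫ r in Set.Ioi π, ‖r ^ 2 * (Real.sin r / r) ^ m‖
      ≤ ∫ r in Set.Ioi π, r ^ ((2:ℝ) - m) := by
    apply setIntegral_mono_on hint.norm
      (integrableOn_Ioi_rpow_of_lt (exp_lt m hm) hπ) measurableSet_Ioi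
    intro x hx
    exact g_bound_tail m hm (h1pi.trans (le_of_lt hx))
  have h3 : ∫ r in Set.Ioi π, r ^ ((2:ℝ) - m) = π^((3:ℝ)-m)/((m:ℝ)-3) := by
    rw [integral_Ioi_rpow_of_lt (exp_lt m hm) hπ]
    have he : (2:ℝ) - m + 1 = 3 - m := by ring
    rw [he]
    have h1 : (3:ℝ) - m ≠ 0 := by linarith
    have h2 : (m:ℝ) - 3 ≠ 0 := by linarith
    field_simp
    ring
  have h4 := h1.trans (h2.trans_eq h3)
  rw [Real.norm_eq_abs] at h4
  exact (abs_le.1 h4).1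

lemma num_lt (m : ℕ) (hm : 5 ≤ m) :
    π^((3:ℝ)-m)/((m:ℝ)-3) < (2/π)^m * ((π/2)^3/3) := by
  have hπ := Real.pi_pos
  have hm5 : (5:ℝ) ≤ m := by exact_mod_cast hm
  have hL : (2/π)^m * ((π/2)^3/3) = (π/2:ℝ)^((3:ℝ)-(m:ℝ))/3 := by
    have hp2 : (0:ℝ) < π/2 := by positivity
    rw [Real.rpow_sub hp2]
    have e1 : (π/2:ℝ)^((3:ℝ)) = (π/2)^(3:ℕ) := by
      rw [← Real.rpow_natCast (π/2) 3]; norm_num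
    have e2 : (π/2:ℝ)^((m:ℝ)) = (π/2)^(m:ℕ) := Real.rpow_natCast _ m
    rw [e1, e2]
    rw [div_pow, div_pow]
    field_simp
    ring_nf
    rw [mul_assoc, ← mul_pow]; norm_num
  have hsplit : (π/2:ℝ)^((3:ℝ)-(m:ℝ)) = π^((3:ℝ)-m) * 2^((m:ℝ)-3) := by
    rw [Real.div_rpow hπ.le (by norm_num : (0:ℝ) ≤ 2), div_eq_mul_inv,
      ← Real.rpow_neg (by norm_num : (0:ℝ) ≤ 2), neg_sub]
  have h2 : (4:ℝ) ≤ 2^((m:ℝ)-3) := by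
    have : (4:ℝ) = 2^(2:ℝ) := by
      rw [show ((2:ℝ):ℝ) = ((2:ℕ):ℝ) by norm_num, Real.rpow_natCast]; norm_num
    rw [this]
    exact Real.rpow_le_rpow_of_exponent_le one_le_two (by linarith)
  have hp : 0 < π^((3:ℝ)-(m:ℝ)) := Real.rpow_pos_of_pos hπ _
  rw [hL, hsplit, div_lt_div_iff₀ (by linarith : (0:ℝ) < (m:ℝ)-3) (by norm_num : (0:ℝ) < 3)]
  have h8 : (8:ℝ) ≤ 2^((m:ℝ)-3) * ((m:ℝ)-3) := by nlinarith
  nlinarith [mul_le_mul_of_nonneg_left h8 hp.le]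

lemma I_pos (m : ℕ) (hm : 4 ≤ m) :
    0 < ∫ r in Set.Ioi (0:ℝ), r ^ 2 * (Real.sin r / r) ^ m := by
  have hπ := Real.pi_pos
  have hint := g_integrable m hm
  have hsplitπ : ∫ r in Set.Ioi (0:ℝ), r ^ 2 * (Real.sin r / r) ^ m
      = (∫ r in Set.Ioc (0:ℝ) π, r ^ 2 * (Real.sin r / r) ^ m)
        + ∫ r in Set.Ioi π, r ^ 2 * (Real.sin r / r) ^ m := by
    rw [← setIntegral_union Set.Ioc_disjoint_Ioi_same measurableSet_Ioi
      (hint.mono_set (fun x hx => hx.1)) (hint.mono_set (Set.Ioi_subset_Ioi hπ.le)),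
      Set.Ioc_union_Ioi_eq_Ioi hπ.le]
  have hsplit2 : ∫ r in Set.Ioc (0:ℝ) π, r ^ 2 * (Real.sin r / r) ^ m
      = (∫ r in Set.Ioc (0:ℝ) (π/2), r ^ 2 * (Real.sin r / r) ^ m)
        + ∫ r in Set.Ioc (π/2) π, r ^ 2 * (Real.sin r / r) ^ m := by
    rw [← setIntegral_union (Set.disjoint_left.2 fun x hx hy => not_lt.2 hx.2 hy.1) measurableSet_Ioc
      (hint.mono_set (fun x hx => hx.1)) (hint.mono_set (fun x hx => lt_trans (by positivity) hx.1)),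
      Set.Ioc_union_Ioc_eq_Ioc (by positivity) (by linarith)]
  have hmid : 0 ≤ ∫ r in Set.Ioc (π/2) π, r ^ 2 * (Real.sin r / r) ^ m := by
    apply setIntegral_nonneg measurableSet_Ioc
    intro x hx
    have hx0 : 0 < x := lt_trans (by positivity) hx.1
    have hs : 0 ≤ Real.sin x := Real.sin_nonneg_of_nonneg_of_le_pi hx0.le hx.2
    positivity
  have hhead := head_lb m hm
  rcases eq_or_lt_of_le hm with h4 | h5
  · -- m = 4
    subst h4
    have htail : 0 ≤ ∫ r in Set.Ioi π, r ^ 2 * (Real.sin r / r) ^ 4 := by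
      apply setIntegral_nonneg measurableSet_Ioi
      intro x hx
      positivity
    have hc : (0:ℝ) < (2/π)^4 * ((π/2)^3/3) := by positivity
    linarith
  · -- 5 ≤ m
    have hm5 : 5 ≤ m := h5
    have htail := tail_lb m hm
    have hnum := num_lt m hm5
    linarith

noncomputable def Phi (m : ℕ) (M : ℝ) : ℝ :=
  ∫ x in Set.Ioi (0:ℝ), x ^ 2 * (Real.sin x / x) ^ m * Real.exp (-x^2/(4*M))

lemma Phi_tendsto (m : ℕ) (hm : 4 ≤ m) :
    Tendsto (Phi m) atTop (𝓝 (∫ r in Set.Ioi (0:ℝ), r ^ 2 * (Real.sin r / r) ^ m)) := by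
  apply tendsto_integral_filter_of_dominated_convergence
  · filter_upwards with M
    exact ((g_meas m).mul
      ((Real.measurable_exp.comp ((measurable_id.pow_const 2).neg.div_const (4*M))))).aestronglyMeasurable
  · filter_upwards [eventually_gt_atTop (0:ℝ)] with M hM
    filter_upwards with x
    rw [norm_mul]
    apply mul_le_of_le_one_right (norm_nonneg _)
    rw [Real.norm_eq_abs, abs_of_pos (Real.exp_pos _), Real.exp_le_one_iff]
    have : 0 ≤ x^2 := sq_nonneg x
    have h4M : 0 < 4*M := by linarith
    exact div_nonpos_of_nonpos_of_nonneg (by linarith) h4M.le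
  · exact (g_integrable m hm).norm
  · filter_upwards with x
    have h1 : Tendsto (fun M : ℝ => -x^2/(4*M)) atTop (𝓝 0) := by
      have : (fun M : ℝ => -x^2/(4*M)) = fun M : ℝ => (-x^2/4)/M := by
        funext M; ring
      rw [this]
      exact Tendsto.div_atTop tendsto_const_nhds tendsto_id
    have h2 : Tendsto (fun M : ℝ => Real.exp (-x^2/(4*M))) atTop (𝓝 1) := by
      have := (Real.continuous_exp.tendsto 0).comp h1; rw [Real.exp_zero] at this; exact this
    simpa using (h2.const_mul (x ^ 2 * (Real.sin x / x) ^ m))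

lemma subst_eq (m : ℕ) {M : ℝ} (hM : 0 < M) :
    (∫ r in Set.Ioi (0:ℝ),
        _root_.sinc (Real.sqrt M * r) ^ m * ((1 / Real.sqrt (4 * π)) * r ^ 2 * Real.exp (-r ^ 2 / 4)))
      = (1 / Real.sqrt (4 * π)) * M ^ (-(3:ℝ)/2) * Phi m M := by
  have hb : 0 < Real.sqrt M := Real.sqrt_pos.2 hM
  set c := 1 / Real.sqrt (4 * π) with hc
  set b := Real.sqrt M with hbdef
  have hbM : b ^ 2 = M := Real.sq_sqrt hM.le
  set G : ℝ → ℝ := fun x => _root_.sinc x ^ m * (c * (x / b) ^ 2 * Real.exp (-(x / b) ^ 2 / 4)) with hG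
  have h1 : (∫ r in Set.Ioi (0:ℝ),
      _root_.sinc (b * r) ^ m * (c * r ^ 2 * Real.exp (-r ^ 2 / 4))) = ∫ r in Set.Ioi (0:ℝ), G (b * r) := by
    apply setIntegral_congr_fun measurableSet_Ioi
    intro r _
    simp only [hG]
    rw [mul_comm b r, mul_div_assoc, div_self hb.ne', mul_one]
  have h2 : (∫ r in Set.Ioi (0:ℝ), G (b * r)) = b⁻¹ • ∫ x in Set.Ioi (b * 0), G x := by
    exact integral_comp_mul_left_Ioi G 0 hb
  have h3 : (∫ x in Set.Ioi (0:ℝ), G x)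
      = (c / M) * Phi m M := by
    rw [Phi, ← integral_const_mul]
    apply setIntegral_congr_fun measurableSet_Ioi
    intro x hx
    have hx0 : (0:ℝ) < x := hx
    have hbx : b * x ≠ 0 := by positivity
    simp only [hG, _root_.sinc]
    rw [if_neg (by positivity : x ≠ 0)]
    have e1 : (x / b) ^ 2 = x ^ 2 / M := by rw [div_pow, hbM]
    rw [e1]
    have e2 : -(x ^ 2 / M) / 4 = -x^2/(4*M) := by ring
    rw [e2]
    ring
  rw [h1, h2, mul_zero, h3]
  have e3 : M ^ (-(3:ℝ)/2) = b⁻¹ * M⁻¹ := by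
    rw [hbdef, Real.sqrt_eq_rpow, ← Real.rpow_neg_one M, ← Real.rpow_neg hM.le,
      ← Real.rpow_add hM]
    norm_num
  rw [e3]
  simp only [smul_eq_mul]
  field_simp

theorem higher_moments_asymptotics (m : ℕ) (hm : 4 ≤ m) :
    IntegrableOn (fun r : ℝ => r ^ 2 * (Real.sin r / r) ^ m) (Set.Ioi 0) ∧
    Asymptotics.IsEquivalent atTop
      (fun M : ℝ => ∫ r in Set.Ioi (0 : ℝ),
        _root_.sinc (Real.sqrt M * r) ^ m * ((1 / Real.sqrt (4 * π)) * r ^ 2 * Real.exp (-r ^ 2 / 4)))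
      (fun M : ℝ =>
        ((1 / Real.sqrt (4 * π)) * ∫ r in Set.Ioi (0 : ℝ), r ^ 2 * (Real.sin r / r) ^ m) *
          M ^ (-(3 : ℝ) / 2)) := by
  refine ⟨g_integrable m hm, ?_⟩
  have hI : 0 < ∫ r in Set.Ioi (0:ℝ), r ^ 2 * (Real.sin r / r) ^ m := I_pos m hm
  set I := ∫ r in Set.Ioi (0:ℝ), r ^ 2 * (Real.sin r / r) ^ m with hIdef
  have hc : 0 < 1 / Real.sqrt (4 * π) := by
    have : 0 < Real.sqrt (4 * π) := Real.sqrt_pos.2 (by positivity)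
    positivity
  set c := 1 / Real.sqrt (4 * π) with hcdef
  rw [Asymptotics.isEquivalent_iff_tendsto_one ?hz]
  case hz =>
    filter_upwards [eventually_gt_atTop (0:ℝ)] with M hM
    exact (mul_pos (mul_pos hc hI) (Real.rpow_pos_of_pos hM _)).ne'
  have key : Tendsto (fun M : ℝ => Phi m M / I) atTop (𝓝 1) := by
    have := (Phi_tendsto m hm).div_const I
    rwa [← hIdef, div_self hI.ne'] at this
  apply key.congr'
  filter_upwards [eventually_gt_atTop (0:ℝ)] with M hM
  have hrp : 0 < M ^ (-(3:ℝ)/2) := Real.rpow_pos_of_pos hM _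
  rw [Pi.div_apply, subst_eq m hM,
    div_eq_div_iff hI.ne' (mul_pos (mul_pos hc hI) hrp).ne']
  ring

end aux
end
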